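/- arXiv:1702.04577 — 10 statements merged into one kernel-verified Lean document; each statement's English description precedes it below -/
import Mathlib

section
/- For every integer n ≥ 2, there is no clustering function on an n-element set S that simultaneously satisfies scale-invariance, richness, and consistency. -/
/-!
By richness some `d₀` is clustered into singletons and some `d₁` into a single cluster. As `S` is
finite, a large multiple `α·d₁` dominates `d₀`, so it is a transformation of `d₀` for the singleton
partition: consistency makes `f (α·d₁)` the singleton partition, while scale-invariance makes it
`f d₁`, the one-cluster partition. These differ as soon as `S` has two points.
-/

open Finset

def IsDistance {S : Type*} (d : S → S → ℝ) : Prop :=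
  (∀ i j, d i j = d j i) ∧ (∀ i, d i i = 0) ∧ (∀ i j, i ≠ j → 0 < d i j)

def SameCluster {S : Type*} [Fintype S] [DecidableEq S]
    (Γ : Finpartition (Finset.univ : Finset S)) (i j : S) : Prop :=
  ∃ C ∈ Γ.parts, i ∈ C ∧ j ∈ C

def IsGammaTransform {S : Type*} [Fintype S] [DecidableEq S]
    (Γ : Finpartition (Finset.univ : Finset S)) (d d' : S → S → ℝ) : Prop :=
  (∀ i j, SameCluster Γ i j → d' i j ≤ d i j) ∧
  (∀ i j, ¬ SameCluster Γ i j → d i j ≤ d' i j)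

def ScaleInvariant {S : Type*} [Fintype S] [DecidableEq S]
    (f : (S → S → ℝ) → Finpartition (Finset.univ : Finset S)) : Prop :=
  ∀ d : S → S → ℝ, IsDistance d → ∀ α : ℝ, 0 < α →
    f (fun i j => α * d i j) = f d

def Rich {S : Type*} [Fintype S] [DecidableEq S]
    (f : (S → S → ℝ) → Finpartition (Finset.univ : Finset S)) : Prop :=
  ∀ Γ : Finpartition (Finset.univ : Finset S), ∃ d : S → S → ℝ, IsDistance d ∧ f d = Γ

def Consistent {S : Type*} [Fintype S] [DecidableEq S]
    (f : (S → S → ℝ) → Finpartition (Finset.univ : Finset S)) : Prop :=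
  ∀ d d' : S → S → ℝ, IsDistance d → IsDistance d' →
    IsGammaTransform (f d) d d' → f d' = f d

variable {S : Type*}

theorem IsDistance.const_mul {d : S → S → ℝ} (hd : IsDistance d) {α : ℝ} (hα : 0 < α) :
    IsDistance fun i j => α * d i j := by
  obtain ⟨hsymm, hzero, hpos⟩ := hd
  exact ⟨fun i j => by simp only [hsymm i j], fun i => by simp only [hzero, mul_zero],
    fun i j hij => mul_pos hα (hpos i j hij)⟩

theorem IsDistance.exists_le_const_mul [Finite S] {d e : S → S → ℝ} (hd : IsDistance d)
    (he : IsDistance e) : ∃ α : ℝ, 0 < α ∧ ∀ i j, d i j ≤ α * e i j := by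
  obtain ⟨C, hC⟩ := Finite.bddAbove_range fun p : S × S => d p.1 p.2 / e p.1 p.2
  refine ⟨max C 1, by positivity, fun i j => ?_⟩
  rcases eq_or_ne i j with rfl | hij
  · rw [hd.2.1, he.2.1, mul_zero]
  have he_pos : 0 < e i j := he.2.2 i j hij
  calc d i j = d i j / e i j * e i j := (div_mul_cancel₀ _ he_pos.ne').symm
    _ ≤ max C 1 * e i j := by
      gcongr
      exact (hC ⟨(i, j), rfl⟩).trans (le_max_left C 1)

section Clustering

variable [Fintype S] [DecidableEq S]

theorem SameCluster.eq_of_bot {i j : S} (h : SameCluster ⊥ i j) : i = j := by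
  obtain ⟨C, hC, hi, hj⟩ := h
  obtain ⟨a, -, rfl⟩ := Finpartition.mem_bot_iff.mp hC
  rw [mem_singleton] at hi hj
  rw [hi, hj]

theorem isGammaTransform_bot_of_le {d d' : S → S → ℝ} (hd : IsDistance d) (hd' : IsDistance d')
    (hle : ∀ i j, d i j ≤ d' i j) : IsGammaTransform ⊥ d d' := by
  refine ⟨fun i j hij => ?_, fun i j _ => hle i j⟩
  rw [hij.eq_of_bot, hd.2.1, hd'.2.1]

theorem Finpartition.top_ne_bot_univ [Nontrivial S] :
    (⊤ : Finpartition (univ : Finset S)) ≠ ⊥ := by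
  intro h
  have hcard := card_le_card (Finpartition.parts_top_subset (univ : Finset S))
  rw [h, Finpartition.card_bot, card_singleton, card_univ] at hcard
  exact (Fintype.one_lt_card_iff_nontrivial.mpr ‹_›).not_ge hcard

variable {f : (S → S → ℝ) → Finpartition (univ : Finset S)}

theorem Consistent.eq_bot_of_eq_bot (hcons : Consistent f) (hscale : ScaleInvariant f)
    {d₀ d : S → S → ℝ} (hd₀ : IsDistance d₀) (hfd₀ : f d₀ = ⊥) (hd : IsDistance d) :
    f d = ⊥ := by
  obtain ⟨α, hα, hle⟩ := hd₀.exists_le_const_mul hd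
  have htrans : IsGammaTransform (f d₀) d₀ fun i j => α * d i j :=
    hfd₀ ▸ isGammaTransform_bot_of_le hd₀ (hd.const_mul hα) hle
  rw [← hscale d hd α hα, hcons d₀ _ hd₀ (hd.const_mul hα) htrans, hfd₀]

theorem not_scaleInvariant_rich_consistent [Nontrivial S] :
    ¬ (ScaleInvariant f ∧ Rich f ∧ Consistent f) := by
  rintro ⟨hscale, hrich, hcons⟩
  obtain ⟨d₀, hd₀, hfd₀⟩ := hrich ⊥
  obtain ⟨d₁, hd₁, hfd₁⟩ := hrich ⊤
  exact Finpartition.top_ne_bot_univ (hfd₁ ▸ hcons.eq_bot_of_eq_bot hscale hd₀ hfd₀ hd₁)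

end Clustering

/-- Kleinberg's impossibility theorem: for every `n ≥ 2` there is no clustering
function on an `n`-element set satisfying scale-invariance, richness and consistency. -/
theorem kleinberg_impossibility (n : ℕ) (hn : 2 ≤ n) :
    ¬ ∃ f : (Fin n → Fin n → ℝ) → Finpartition (Finset.univ : Finset (Fin n)),
        ScaleInvariant f ∧ Rich f ∧ Consistent f := by
  have : Nontrivial (Fin n) := Fin.nontrivial_iff_two_le.mpr hn
  rintro ⟨f, hf⟩
  exact not_scaleInvariant_rich_consistent hf
end

section
/- For a set S with exactly 2 elements, there is no clustering function on S that satisfies both scale-invariance and richness. -/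
open Finset

/-!
On two points a distance function is determined by its single off-diagonal value, so any two
distance functions are positive multiples of each other. A scale-invariant clustering function is
therefore constant, whereas richness requires it to take both the discrete and the indiscrete
partition as values.
-/

section TwoPoints

variable {S : Type*} [Fintype S]

theorem Fintype.eq_or_eq_of_card_eq_two (hS : Fintype.card S = 2)
    {a b : S} (hab : a ≠ b) (x : S) : x = a ∨ x = b := by
  have hS' : Nat.card S = 2 := by rwa [Nat.card_eq_fintype_card]
  obtain ⟨c, -, hc⟩ := (Nat.card_eq_two_iff' a).1 hS'
  rw [or_iff_not_imp_left]
  intro hxa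
  rw [hc x hxa, hc b hab.symm]

theorem IsDistance.apply_eq_of_card_eq_two (hS : Fintype.card S = 2) {d : S → S → ℝ}
    (hd : IsDistance d) {i j a b : S} (hij : i ≠ j) (hab : a ≠ b) : d i j = d a b := by
  rcases Fintype.eq_or_eq_of_card_eq_two hS hab i with rfl | rfl <;>
    rcases Fintype.eq_or_eq_of_card_eq_two hS hab j with rfl | rfl
  · exact absurd rfl hij
  · rfl
  · exact hd.1 _ _
  · exact absurd rfl hij

theorem IsDistance.eq_mul_of_card_eq_two (hS : Fintype.card S = 2) {d d' : S → S → ℝ}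
    (hd : IsDistance d) (hd' : IsDistance d') {a b : S} (hab : a ≠ b) :
    d' = fun i j => d' a b / d a b * d i j := by
  funext i j
  by_cases hij : i = j
  · simp [hij, hd.2.1, hd'.2.1]
  · rw [hd.apply_eq_of_card_eq_two hS hij hab, hd'.apply_eq_of_card_eq_two hS hij hab,
      div_mul_cancel₀ _ (hd.2.2 a b hab).ne']

theorem ScaleInvariant.apply_eq_of_card_eq_two [DecidableEq S] (hS : Fintype.card S = 2)
    {f : (S → S → ℝ) → Finpartition (Finset.univ : Finset S)} (hf : ScaleInvariant f)
    {d d' : S → S → ℝ} (hd : IsDistance d) (hd' : IsDistance d') : f d' = f d := by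
  obtain ⟨a, b, hab⟩ := Fintype.exists_pair_of_one_lt_card (hS ▸ one_lt_two)
  rw [hd.eq_mul_of_card_eq_two hS hd' hab]
  exact hf d hd _ (div_pos (hd'.2.2 a b hab) (hd.2.2 a b hab))

end TwoPoints

theorem Finpartition.nontrivial_of_one_lt_card {α : Type*} [DecidableEq α] {s : Finset α}
    (hs : 1 < #s) : Nontrivial (Finpartition s) := by
  have hs₀ : s ≠ ⊥ := Finset.nonempty_iff_ne_empty.1 (Finset.card_pos.1 (by omega))
  refine ⟨⊥, indiscrete hs₀, fun h => ?_⟩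
  have hcard := congrArg (fun P : Finpartition s => #P.parts) h
  simp only [card_bot, indiscrete_parts, card_singleton] at hcard
  omega

/-- On a two-element set there is no clustering function that is both
scale-invariant and rich. -/
theorem no_scaleInvariant_rich_on_two_points (S : Type*) [Fintype S] [DecidableEq S]
    (hS : Fintype.card S = 2) :
    ¬ ∃ f : (S → S → ℝ) → Finpartition (Finset.univ : Finset S),
        ScaleInvariant f ∧ Rich f := by
  rintro ⟨f, hf, hrich⟩
  have : Nontrivial (Finpartition (Finset.univ : Finset S)) :=
    Finpartition.nontrivial_of_one_lt_card (by rw [Finset.card_univ, hS]; exact one_lt_two)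
  obtain ⟨P, Q, hPQ⟩ := exists_pair_ne (Finpartition (Finset.univ : Finset S))
  obtain ⟨d, hd, rfl⟩ := hrich P
  obtain ⟨d', hd', rfl⟩ := hrich Q
  exact hPQ (hf.apply_eq_of_card_eq_two hS hd' hd)
end

section
/- Let n > 2, let m ≥ 1, and let f be a clustering function defined on the distance functions on an n-element set S that are realizable in ℝ^m. If f satisfies scale-invariance and consistency (with respect to rescalings and Γ-transformations that stay within the realizable distance functions), and f(d1) equals the one-cluster (no-split) partition {S} for some realizable distance function d1, then f(d2) = {S} for every realizable distance function d2; in particular, no such f can produce both the no-split partition under some distance function and any other partition under another distance function. -/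
open Finset

/-- A distance function on `S` is realizable in `ℝ^m` if it is induced by an
injective embedding of `S` into `ℝ^m`. -/
def RealizableIn {S : Type*} (m : ℕ) (d : S → S → ℝ) : Prop :=
  ∃ φ : S → EuclideanSpace ℝ (Fin m), Function.Injective φ ∧
    ∀ i j, d i j = dist (φ i) (φ j)

/-- Scale-invariance restricted to distance functions realizable in `ℝ^m`. -/
def ScaleInvariantOn {S : Type*} [Fintype S] [DecidableEq S] (m : ℕ)
    (f : (S → S → ℝ) → Finpartition (Finset.univ : Finset S)) : Prop :=
  ∀ d : S → S → ℝ, RealizableIn m d → ∀ α : ℝ, 0 < α →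
    RealizableIn m (fun i j => α * d i j) →
    f (fun i j => α * d i j) = f d

/-- Consistency restricted to distance functions realizable in `ℝ^m`. -/
def ConsistentOn {S : Type*} [Fintype S] [DecidableEq S] (m : ℕ)
    (f : (S → S → ℝ) → Finpartition (Finset.univ : Finset S)) : Prop :=
  ∀ d d' : S → S → ℝ, RealizableIn m d → RealizableIn m d' →
    IsGammaTransform (f d) d d' → f d' = f d

/-! Shrink `d₂` by a factor `α > 0` until `α * d₂ ≤ d₁` pointwise, which is possible because `d₁`
is positive off the diagonal and there are finitely many pairs. As `f d₁` is a single cluster,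
`α * d₂` is an `f d₁`-transformation of `d₁`, so `f d₂ = f (α * d₂) = f d₁` by scale-invariance
and consistency. -/

open Filter Topology

theorem exists_pos_mul_le_of_finite {ι : Type*} [Finite ι] {a b : ι → ℝ} (ha : ∀ i, 0 ≤ a i)
    (hab : ∀ i, 0 < b i → 0 < a i) : ∃ α > 0, ∀ i, α * b i ≤ a i := by
  have eventually_le : ∀ i, ∀ᶠ α in 𝓝[>] (0 : ℝ), α * b i ≤ a i := by
    intro i
    rcases le_or_gt (b i) 0 with hb | hb
    · filter_upwards [self_mem_nhdsWithin] with α hα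
      exact (mul_nonpos_of_nonneg_of_nonpos hα.le hb).trans (ha i)
    · have hlim : Tendsto (fun α : ℝ => α * b i) (𝓝[>] 0) (𝓝 (0 * b i)) :=
        (tendsto_id.mul_const (b i)).mono_left nhdsWithin_le_nhds
      rw [zero_mul] at hlim
      exact (hlim.eventually (gt_mem_nhds (hab i hb))).mono fun _ => le_of_lt
  obtain ⟨α, hle, hα⟩ := ((eventually_all.2 eventually_le).and self_mem_nhdsWithin).exists
  exact ⟨α, hα, hle⟩

namespace RealizableIn

variable {S : Type*} {m : ℕ} {d : S → S → ℝ}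

theorem nonneg (hd : RealizableIn m d) (i j : S) : 0 ≤ d i j := by
  obtain ⟨φ, -, hφ⟩ := hd
  exact hφ i j ▸ dist_nonneg

theorem pos_of_ne (hd : RealizableIn m d) {i j : S} (hij : i ≠ j) : 0 < d i j := by
  obtain ⟨φ, hφinj, hφ⟩ := hd
  exact hφ i j ▸ dist_pos.2 (hφinj.ne hij)

theorem apply_self (hd : RealizableIn m d) (i : S) : d i i = 0 := by
  obtain ⟨φ, -, hφ⟩ := hd
  exact hφ i i ▸ dist_self _

theorem const_mul (hd : RealizableIn m d) {α : ℝ} (hα : 0 < α) :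
    RealizableIn m (fun i j => α * d i j) := by
  obtain ⟨φ, hφinj, hφ⟩ := hd
  refine ⟨fun i => α • φ i, (smul_right_injective _ hα.ne').comp hφinj, fun i j => ?_⟩
  simp only [hφ i j, dist_smul₀, Real.norm_of_nonneg hα.le]

theorem exists_pos_mul_le [Finite S] {m' : ℕ} {d' : S → S → ℝ} (hd : RealizableIn m d)
    (hd' : RealizableIn m' d') : ∃ α > 0, ∀ i j, α * d' i j ≤ d i j := by
  have hpos : ∀ p : S × S, 0 < d' p.1 p.2 → 0 < d p.1 p.2 := by
    rintro ⟨i, j⟩ h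
    refine hd.pos_of_ne fun hij : i = j => ?_
    subst hij
    exact h.ne' (hd'.apply_self i)
  obtain ⟨α, hα, hle⟩ := exists_pos_mul_le_of_finite (fun p : S × S => hd.nonneg p.1 p.2) hpos
  exact ⟨α, hα, fun i j => hle (i, j)⟩

end RealizableIn

theorem isGammaTransform_of_parts_eq_singleton_univ {S : Type*} [Fintype S] [DecidableEq S]
    {Γ : Finpartition (Finset.univ : Finset S)} (hΓ : Γ.parts = {Finset.univ})
    {d d' : S → S → ℝ} (hle : ∀ i j, d' i j ≤ d i j) : IsGammaTransform Γ d d' := by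
  have hsame : ∀ i j, SameCluster Γ i j := fun i j =>
    ⟨Finset.univ, hΓ ▸ Finset.mem_singleton_self _, Finset.mem_univ i, Finset.mem_univ j⟩
  exact ⟨fun i j _ => hle i j, fun i j h => absurd (hsame i j) h⟩

theorem no_split_forces_trivial_general (n m : ℕ)
    (f : (Fin n → Fin n → ℝ) → Finpartition (Finset.univ : Finset (Fin n)))
    (hscale : ScaleInvariantOn m f) (hcons : ConsistentOn m f)
    (d1 : Fin n → Fin n → ℝ) (hd1 : RealizableIn m d1)
    (h1 : (f d1).parts = {(Finset.univ : Finset (Fin n))}) :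
    ∀ d2 : Fin n → Fin n → ℝ, RealizableIn m d2 →
      (f d2).parts = {(Finset.univ : Finset (Fin n))} := by
  intro d2 hd2
  obtain ⟨α, hα, hle⟩ := hd1.exists_pos_mul_le hd2
  have hαd2 := hd2.const_mul hα
  rw [← hscale d2 hd2 α hα hαd2,
    hcons d1 _ hd1 hαd2 (isGammaTransform_of_parts_eq_singleton_univ h1 hle), h1]

/-- For `n > 2` and `m ≥ 1`, a clustering function on the distance functions on an
`n`-element set realizable in `ℝ^m` that is scale-invariant and consistent and returns
the one-cluster (no-split) partition on some realizable distance function returns the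
no-split partition on every realizable distance function. -/
theorem no_split_forces_trivial (n m : ℕ) (hn : 2 < n) (hm : 1 ≤ m)
    (f : (Fin n → Fin n → ℝ) → Finpartition (Finset.univ : Finset (Fin n)))
    (hscale : ScaleInvariantOn m f) (hcons : ConsistentOn m f)
    (d1 : Fin n → Fin n → ℝ) (hd1 : RealizableIn m d1)
    (h1 : (f d1).parts = {(Finset.univ : Finset (Fin n))}) :
    ∀ d2 : Fin n → Fin n → ℝ, RealizableIn m d2 →
      (f d2).parts = {(Finset.univ : Finset (Fin n))} :=
  no_split_forces_trivial_general n m f hscale hcons d1 hd1 h1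
end

section
/- Let S be a finite set with |S| > 2, let d be a distance function on S, let Γ be any partition of S into nonempty clusters, and let m ≥ 1. Then there exists an injective map φ : S → ℝ^m such that the induced Euclidean distance d_E(i,j) = ‖φ(i) − φ(j)‖ is a Γ-transformation of d. Consequently, for every consistent clustering function f on S with f(d) = Γ, one has f(d_E) = Γ; i.e., every partition returned by a consistent clustering function is also returned on a distance function realizable in ℝ^m. -/
open Finset

/-!
Place the points on a line, cluster by cluster. Let `δ > 0` be a lower bound for `d` between
distinct points and `D` an upper bound for `d`. Numbering the clusters by integers, cluster `k`
is embedded injectively into the window `[k (D + δ), k (D + δ) + δ)`. Two points of one cluster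
are then less than `δ` apart, hence closer than in `d`; two points of different clusters are at
least `D` apart, hence farther than in `d`. A line sits isometrically in `ℝ^m` for `m ≥ 1`.
-/

section Realization

variable {S : Type*} {d : S → S → ℝ}

theorem IsDistance.nonneg (hd : IsDistance d) (i j : S) : 0 ≤ d i j := by
  rcases eq_or_ne i j with rfl | hij
  · exact (hd.2.1 i).ge
  · exact (hd.2.2 i j hij).le

open Topology in
theorem IsDistance.exists_pos_le [Finite S] (hd : IsDistance d) :
    ∃ δ > 0, ∀ i j, i ≠ j → δ ≤ d i j := by
  -- each of the finitely many conditions holds for all small enough `δ > 0`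
  have h : ∀ᶠ δ in 𝓝[>] (0 : ℝ), ∀ i j, i ≠ j → δ ≤ d i j := by
    refine Filter.eventually_all.2 fun i => Filter.eventually_all.2 fun j => ?_
    by_cases hij : i = j
    · exact .of_forall fun _ h => absurd hij h
    · exact ((eventually_le_nhds (hd.2.2 i j hij)).filter_mono nhdsWithin_le_nhds).mono
        fun _ h _ => h
  obtain ⟨δ, hδ, hδ0⟩ := (h.and self_mem_nhdsWithin).exists
  exact ⟨δ, hδ0, hδ⟩

theorem isDistance_dist_comp {X : Type*} [MetricSpace X] {φ : S → X} (hφ : Function.Injective φ) :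
    IsDistance fun i j => dist (φ i) (φ j) :=
  ⟨fun _ _ => dist_comm _ _, fun _ => dist_self _, fun _ _ hij => dist_pos.2 (hφ.ne hij)⟩

theorem sub_le_abs_intCast_mul_add_sub_add {a b : ℤ} (hab : a ≠ b) {M δ x y : ℝ} (hM : 0 ≤ M)
    (hxy : |x - y| ≤ δ) : M - δ ≤ |(a * M + x) - (b * M + y)| := by
  have hab' : (1 : ℝ) ≤ |(a : ℝ) - b| := by exact_mod_cast Int.one_le_abs (sub_ne_zero.2 hab)
  calc M - δ ≤ |((a : ℝ) - b) * M| - |-(x - y)| := by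
        rw [abs_mul, abs_of_nonneg hM, abs_neg]; nlinarith
    _ ≤ |((a : ℝ) - b) * M - -(x - y)| := abs_sub_abs_le_abs_sub _ _
    _ = |(a * M + x) - (b * M + y)| := by ring_nf

theorem nonempty_embedding_of_finite_infinite (α β : Type*) [Finite α] [Infinite β] :
    Nonempty (α ↪ β) := by
  have := Fintype.ofFinite α
  exact ⟨(Fintype.equivFin α).toEmbedding.trans (Fin.valEmbedding.trans (Infinite.natEmbedding β))⟩

theorem IsDistance.exists_injective_real_of_labels [Finite S] (c : S → ℤ) (hd : IsDistance d) :
    ∃ p : S → ℝ, Function.Injective p ∧ (∀ i j, c i = c j → dist (p i) (p j) ≤ d i j) ∧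
      ∀ i j, c i ≠ c j → d i j ≤ dist (p i) (p j) := by
  obtain ⟨δ, hδ, hδd⟩ := hd.exists_pos_le
  obtain ⟨D, hD⟩ := Finite.bddAbove_range fun ij : S × S => d ij.1 ij.2
  have hdD : ∀ i j, d i j ≤ D := fun i j => hD ⟨(i, j), rfl⟩
  have := Set.Ico.infinite hδ
  obtain ⟨o⟩ := nonempty_embedding_of_finite_infinite S (Set.Ico 0 δ)
  have ho : ∀ i j, |(o i : ℝ) - o j| < δ := fun i j =>
    abs_sub_lt_of_nonneg_of_lt (o i).2.1 (o i).2.2 (o j).2.1 (o j).2.2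
  set p : S → ℝ := fun i => c i * (D + δ) + o i
  have hsame : ∀ i j, c i = c j → dist (p i) (p j) = |(o i : ℝ) - o j| := by
    intro i j h
    simp only [p, Real.dist_eq, h, add_sub_add_left_eq_sub]
  have hdiff : ∀ i j, c i ≠ c j → D ≤ dist (p i) (p j) := by
    intro i j h
    have hD0 : 0 ≤ D := (hd.nonneg i j).trans (hdD i j)
    calc D = D + δ - δ := by ring
      _ ≤ dist (p i) (p j) :=
        sub_le_abs_intCast_mul_add_sub_add h (by linarith) (ho i j).le
  refine ⟨p, ?_, fun i j h => ?_, fun i j h => (hdD i j).trans (hdiff i j h)⟩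
  · intro i j hij
    by_contra hne
    by_cases h : c i = c j
    · have hoij : (o i : ℝ) = o j := by simpa [p, h] using hij
      exact hne (o.injective (Subtype.ext hoij))
    · have := hdiff i j h
      rw [hij, dist_self] at this
      linarith [hd.2.2 i j hne, hdD i j]
  · rcases eq_or_ne i j with rfl | hij
    · exact (dist_self _).trans_le (hd.nonneg i i)
    · exact (hsame i j h).trans_le ((ho i j).le.trans (hδd i j hij))

theorem sameCluster_iff_part_eq [Fintype S] [DecidableEq S]
    {Γ : Finpartition (Finset.univ : Finset S)} {i j : S} :
    SameCluster Γ i j ↔ Γ.part i = Γ.part j :=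
  (Γ.mem_part_iff_exists).symm.trans (Γ.mem_part_iff_part_eq_part (mem_univ i) (mem_univ j))

theorem IsDistance.exists_injective_real_isGammaTransform [Fintype S] [DecidableEq S]
    (hd : IsDistance d) (Γ : Finpartition (Finset.univ : Finset S)) :
    ∃ p : S → ℝ, Function.Injective p ∧ IsGammaTransform Γ d fun i j => dist (p i) (p j) := by
  set c : S → ℤ := fun i => (Fintype.equivFin (Finset S) (Γ.part i) : ℕ)
  have hc : ∀ i j, SameCluster Γ i j ↔ c i = c j := fun i j => by
    simp only [c, sameCluster_iff_part_eq, Nat.cast_inj, Fin.val_inj, EmbeddingLike.apply_eq_iff_eq]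
  obtain ⟨p, hp, hsame, hdiff⟩ := hd.exists_injective_real_of_labels c
  exact ⟨p, hp, fun i j h => hsame i j ((hc i j).1 h), fun i j h => hdiff i j (mt (hc i j).2 h)⟩

end Realization

theorem gamma_transform_realizable_in_euclidean_general (S : Type*) [Fintype S] [DecidableEq S]
    (d : S → S → ℝ) (hd : IsDistance d)
    (Γ : Finpartition (Finset.univ : Finset S)) (m : ℕ) (hm : 1 ≤ m) :
    ∃ φ : S → EuclideanSpace ℝ (Fin m), Function.Injective φ ∧
      IsGammaTransform Γ d (fun i j => dist (φ i) (φ j)) ∧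
      ∀ f : (S → S → ℝ) → Finpartition (Finset.univ : Finset S),
        Consistent f → f d = Γ → f (fun i j => dist (φ i) (φ j)) = Γ := by
  obtain ⟨p, hp, hΓ⟩ := hd.exists_injective_real_isGammaTransform Γ
  let ι : ℝ → EuclideanSpace ℝ (Fin m) := EuclideanSpace.single ⟨0, hm⟩
  have hι : Isometry ι := Isometry.of_dist_eq fun a b => by simp [ι]
  have hdist : ∀ i j, dist (ι (p i)) (ι (p j)) = dist (p i) (p j) := fun i j => hι.dist_eq _ _
  refine ⟨ι ∘ p, hι.injective.comp hp, by simpa only [Function.comp_apply, hdist], ?_⟩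
  intro f hf hfd
  simp only [Function.comp_apply, hdist]
  rw [hf d _ hd (isDistance_dist_comp hp) (hfd ▸ hΓ), hfd]

/-- Every partition returned by a consistent clustering function is also returned
on a distance function realizable in `ℝ^m`: there is an injective embedding
`φ : S → ℝ^m` whose induced Euclidean distance is a `Γ`-transformation of `d`. -/
theorem gamma_transform_realizable_in_euclidean (S : Type*) [Fintype S] [DecidableEq S]
    (hS : 2 < Fintype.card S) (d : S → S → ℝ) (hd : IsDistance d)
    (Γ : Finpartition (Finset.univ : Finset S)) (m : ℕ) (hm : 1 ≤ m) :
    ∃ φ : S → EuclideanSpace ℝ (Fin m), Function.Injective φ ∧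
      IsGammaTransform Γ d (fun i j => dist (φ i) (φ j)) ∧
      ∀ f : (S → S → ℝ) → Finpartition (Finset.univ : Finset S),
        Consistent f → f d = Γ → f (fun i j => dist (φ i) (φ j)) = Γ :=
  gamma_transform_realizable_in_euclidean_general S d hd Γ m hm
end

section
/- (k-richness of ideal k-means.) Let S be a finite set and let 1 ≤ k ≤ |S|. For every partition Γ of S into exactly k nonempty clusters, there exists an injective embedding x : S → ℝ such that Γ is a global minimizer of the k-means objective Q among all partitions of S into k nonempty clusters for the point family (x_s)_{s∈S}. -/
/-!
Put the clusters of `Γ` far apart on the line and the points of each cluster close together: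
with `n = |S|`, clusters of diameter at most `n` and gaps of at least `n² + n + 1`. Comparing with
an anchor point of each cluster, `Q(Γ) ≤ n · n²`. A partition `Γ'` with no more parts than `Γ` either
refines `Γ`, and then equals it by counting parts, or has a part containing two points `i, j`
from different clusters of `Γ`; that part alone costs at least `(x i - x j)² / 2 > n³`.
-/

open Finset

/-- Centroid of the points `x i`, `i ∈ C`, on the real line. -/
noncomputable def centroid1 {S : Type*} (x : S → ℝ) (C : Finset S) : ℝ :=
  (∑ i ∈ C, x i) / C.card

/-- The k-means objective of a partition `Γ` for the point family `x`:
the sum over clusters of the squared distances of the cluster's points to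
the cluster centroid. -/
noncomputable def kmeansObjective {S : Type*} [Fintype S] [DecidableEq S]
    (x : S → ℝ) (Γ : Finpartition (Finset.univ : Finset S)) : ℝ :=
  ∑ C ∈ Γ.parts, ∑ i ∈ C, (x i - centroid1 x C) ^ 2

namespace Finpartition

variable {α : Type*} [DecidableEq α] {s : Finset α} {P Q : Finpartition s}

theorem eq_of_le_of_card_parts_le (h : P ≤ Q) (hc : #P.parts ≤ #Q.parts) : P = Q := by
  choose f hfQ hle using fun p (hp : p ∈ P.parts) => h hp
  have hf_surj : ∀ q ∈ Q.parts, ∃ p, ∃ hp : p ∈ P.parts, f p hp = q := by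
    intro q hq
    obtain ⟨p, hp, hpq⟩ := exists_le_of_le h hq
    obtain ⟨a, ha⟩ := P.nonempty_of_mem_parts hp
    exact ⟨p, hp, Q.eq_of_mem_parts (hfQ p hp) hq (hle p hp ha) (hpq ha)⟩
  have hf_inj := inj_on_of_surj_on_of_card_le f hfQ hf_surj hc
  refine le_antisymm h fun q hq => ?_
  obtain ⟨p, hp, rfl⟩ := hf_surj q hq
  refine ⟨p, hp, fun a ha => ?_⟩
  have has : a ∈ s := Q.le (hfQ p hp) ha
  have hpa : P.part a ∈ P.parts := P.part_mem.2 has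
  have : P.part a = p := hf_inj hpa hp <|
    Q.eq_of_mem_parts (hfQ _ hpa) (hfQ p hp) (hle _ hpa (P.mem_part has)) ha
  exact this ▸ P.mem_part has

theorem exists_mem_notMem_part_of_not_le (h : ¬P ≤ Q) :
    ∃ C ∈ P.parts, ∃ i ∈ C, ∃ j ∈ C, j ∉ Q.part i := by
  obtain ⟨C, hC, hCQ⟩ : ∃ C ∈ P.parts, ∀ D ∈ Q.parts, ¬C ⊆ D := by
    simpa [LE.le] using h
  obtain ⟨i, hi⟩ := P.nonempty_of_mem_parts hC
  obtain ⟨j, hj, hji⟩ := not_subset.1 (hCQ _ (Q.part_mem.2 (P.le hC hi)))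
  exact ⟨C, hC, i, hi, j, hj, hji⟩

end Finpartition

section Centroid

variable {S : Type*} (x : S → ℝ) (C : Finset S)

theorem card_mul_centroid1 : (#C : ℝ) * centroid1 x C = ∑ i ∈ C, x i :=
  mul_div_cancel_of_imp' fun h => by simp [card_eq_zero.1 (by exact_mod_cast h)]

theorem sum_sq_sub_centroid1_le (a : ℝ) :
    ∑ i ∈ C, (x i - centroid1 x C) ^ 2 ≤ ∑ i ∈ C, (x i - a) ^ 2 := by
  set μ := centroid1 x C
  have hsplit : ∑ i ∈ C, (x i - a) ^ 2
      = ∑ i ∈ C, (x i - μ) ^ 2 + 2 * (μ - a) * (∑ i ∈ C, x i - #C * μ) + #C * (μ - a) ^ 2 := by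
    simp only [sub_sq, sum_add_distrib, sum_sub_distrib, ← sum_mul, ← mul_sum, sum_const,
      nsmul_eq_mul]
    ring
  rw [hsplit, card_mul_centroid1, sub_self, mul_zero, add_zero]
  exact le_add_of_nonneg_right (by positivity)

theorem sum_sq_sub_centroid1_le_card_mul_sq {r : ℝ}
    (hr : ∀ i ∈ C, ∀ j ∈ C, |x i - x j| ≤ r) :
    ∑ i ∈ C, (x i - centroid1 x C) ^ 2 ≤ #C * r ^ 2 := by
  rcases C.eq_empty_or_nonempty with rfl | ⟨j, hj⟩
  · simp
  calc ∑ i ∈ C, (x i - centroid1 x C) ^ 2 ≤ ∑ i ∈ C, (x i - x j) ^ 2 :=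
        sum_sq_sub_centroid1_le x C (x j)
    _ ≤ #C • r ^ 2 := sum_le_card_nsmul _ _ _ fun i hi =>
        have hij := abs_le.1 (hr i hi j hj)
        sq_le_sq' hij.1 hij.2
    _ = #C * r ^ 2 := nsmul_eq_mul _ _

theorem sq_sub_div_two_le_sum_sq_sub_centroid1 {i j : S} (hi : i ∈ C) (hj : j ∈ C) :
    (x i - x j) ^ 2 / 2 ≤ ∑ l ∈ C, (x l - centroid1 x C) ^ 2 := by
  classical
  set μ := centroid1 x C
  obtain rfl | hij := eq_or_ne i j
  · simpa using sum_nonneg fun l _ => sq_nonneg (x l - μ)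
  calc (x i - x j) ^ 2 / 2 ≤ (x i - μ) ^ 2 + (x j - μ) ^ 2 := by
        nlinarith [sq_nonneg (x i + x j - 2 * μ)]
    _ = ∑ l ∈ {i, j}, (x l - μ) ^ 2 := (sum_pair (f := fun l => (x l - μ) ^ 2) hij).symm
    _ ≤ ∑ l ∈ C, (x l - μ) ^ 2 :=
        sum_le_sum_of_subset_of_nonneg (insert_subset hi (singleton_subset_iff.2 hj))
          fun l _ _ => sq_nonneg _

end Centroid

structure Finpartition.IsSeparatedBy {S : Type*} [DecidableEq S] {s : Finset S}
    (Γ : Finpartition s) (x : S → ℝ) (r R : ℝ) : Prop where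
  near : ∀ D ∈ Γ.parts, ∀ i ∈ D, ∀ j ∈ D, |x i - x j| ≤ r
  far : ∀ D ∈ Γ.parts, ∀ i ∈ D, ∀ j ∉ D, R ≤ |x i - x j|

section KMeans

variable {S : Type*} [Fintype S] [DecidableEq S] (x : S → ℝ)

theorem kmeansObjective_le_card_mul_sq (Γ : Finpartition (univ : Finset S)) {r : ℝ}
    (hr : ∀ D ∈ Γ.parts, ∀ i ∈ D, ∀ j ∈ D, |x i - x j| ≤ r) :
    kmeansObjective x Γ ≤ Fintype.card S * r ^ 2 :=
  calc kmeansObjective x Γ ≤ ∑ D ∈ Γ.parts, (#D : ℝ) * r ^ 2 :=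
        sum_le_sum fun D hD => sum_sq_sub_centroid1_le_card_mul_sq x D (hr D hD)
    _ = Fintype.card S * r ^ 2 := by
        rw [← sum_mul, ← card_univ, ← Γ.sum_card_parts, Nat.cast_sum]

theorem sq_sub_div_two_le_kmeansObjective (Γ : Finpartition (univ : Finset S)) {C : Finset S}
    (hC : C ∈ Γ.parts) {i j : S} (hi : i ∈ C) (hj : j ∈ C) :
    (x i - x j) ^ 2 / 2 ≤ kmeansObjective x Γ :=
  (sq_sub_div_two_le_sum_sq_sub_centroid1 x C hi hj).trans <|
    single_le_sum (f := fun C => ∑ l ∈ C, (x l - centroid1 x C) ^ 2)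
      (fun _ _ => sum_nonneg fun _ _ => sq_nonneg _) hC

theorem kmeansObjective_le_of_isSeparatedBy {Γ : Finpartition (univ : Finset S)} {r R : ℝ}
    (hΓ : Γ.IsSeparatedBy x r R) (hR : 0 ≤ R) (hrR : Fintype.card S * r ^ 2 ≤ R ^ 2 / 2)
    {Γ' : Finpartition (univ : Finset S)} (hcard : #Γ'.parts ≤ #Γ.parts) :
    kmeansObjective x Γ ≤ kmeansObjective x Γ' := by
  by_cases hle : Γ' ≤ Γ
  · rw [Finpartition.eq_of_le_of_card_parts_le hle hcard]
  obtain ⟨C, hC, i, hi, j, hj, hji⟩ := Finpartition.exists_mem_notMem_part_of_not_le hle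
  have hij : R ≤ |x i - x j| :=
    hΓ.far _ (Γ.part_mem.2 (mem_univ i)) i (Γ.mem_part (mem_univ i)) j hji
  calc kmeansObjective x Γ ≤ Fintype.card S * r ^ 2 := kmeansObjective_le_card_mul_sq x Γ hΓ.near
    _ ≤ R ^ 2 / 2 := hrR
    _ ≤ (x i - x j) ^ 2 / 2 := by
        rw [← sq_abs (x i - x j)]
        gcongr
    _ ≤ kmeansObjective x Γ' := sq_sub_div_two_le_kmeansObjective x Γ' hC hi hj

end KMeans

theorem sub_le_abs_mul_natCast_add_sub_mul_natCast_add {M r c d : ℝ} (hM : 0 ≤ M)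
    (hcd : |c - d| ≤ r) {a b : ℕ} (hab : a ≠ b) :
    M - r ≤ |(M * a + c) - (M * b + d)| := by
  have hab' : (1 : ℝ) ≤ |(a : ℝ) - b| := by
    exact_mod_cast Int.one_le_abs (sub_ne_zero.2 (Nat.cast_injective.ne hab : (a : ℤ) ≠ b))
  calc M - r ≤ |M * (a - b)| - |d - c| := by
        rw [abs_mul, abs_of_nonneg hM, abs_sub_comm d c]
        nlinarith [mul_le_mul_of_nonneg_left hab' hM]
    _ ≤ |M * (a - b) - (d - c)| := abs_sub_abs_le_abs_sub _ _
    _ = |(M * a + c) - (M * b + d)| := by ring_nf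

theorem Finpartition.exists_injective_isSeparatedBy {S : Type*} [Fintype S] [DecidableEq S]
    (Γ : Finpartition (univ : Finset S)) :
    ∃ x : S → ℝ, Function.Injective x ∧
      Γ.IsSeparatedBy x (Fintype.card S) (Fintype.card S ^ 2 + Fintype.card S + 1) := by
  set n := Fintype.card S
  let e := Fintype.equivFin S
  let E := Fintype.equivFin (Finset S)
  let x : S → ℝ := fun i => (n + 1) ^ 2 * (E (Γ.part i) : ℕ) + (e i : ℕ)
  have he : ∀ i j, |((e i : ℕ) : ℝ) - (e j : ℕ)| ≤ n := fun i j =>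
    abs_sub_le_of_nonneg_of_le (by positivity) (by exact_mod_cast (e i).2.le)
      (by positivity) (by exact_mod_cast (e j).2.le)
  have hfar : ∀ i j, Γ.part i ≠ Γ.part j → n ^ 2 + n + 1 ≤ |x i - x j| := fun i j hij => by
    have := sub_le_abs_mul_natCast_add_sub_mul_natCast_add (M := (n + 1) ^ 2) (by positivity)
      (he i j) (Fin.val_injective.ne (E.injective.ne hij))
    simp only [x]
    linarith
  refine ⟨x, fun i j hx => ?_, ⟨fun D hD i hi j hj => ?_, fun D hD i hi j hj => ?_⟩⟩
  · by_cases hij : Γ.part i = Γ.part j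
    · simp only [x, hij, add_right_inj, Nat.cast_inj] at hx
      exact e.injective (Fin.ext hx)
    · have := hfar i j hij
      rw [hx, sub_self, abs_zero] at this
      exact absurd this (not_le.2 (by positivity))
  · simpa [x, Γ.part_eq_of_mem hD hi, Γ.part_eq_of_mem hD hj] using he i j
  · refine hfar i j fun hij => hj ?_
    rw [← Γ.part_eq_of_mem hD hi, hij]
    exact Γ.mem_part (mem_univ j)

theorem kmeans_k_rich_general (S : Type*) [Fintype S] [DecidableEq S] (k : ℕ)
    (Γ : Finpartition (Finset.univ : Finset S)) (hΓ : Γ.parts.card = k) :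
    ∃ x : S → ℝ, Function.Injective x ∧
      ∀ Γ' : Finpartition (Finset.univ : Finset S), Γ'.parts.card = k →
        kmeansObjective x Γ ≤ kmeansObjective x Γ' := by
  obtain ⟨x, hx, hΓx⟩ := Γ.exists_injective_isSeparatedBy
  refine ⟨x, hx, fun Γ' hΓ' =>
    kmeansObjective_le_of_isSeparatedBy x hΓx (by positivity) ?_ (by rw [hΓ', hΓ])⟩
  have hn : (0 : ℝ) ≤ Fintype.card S := Nat.cast_nonneg _
  nlinarith [pow_nonneg hn 4, pow_nonneg hn 3, pow_nonneg hn 2]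

/-- k-richness of ideal k-means: for every partition of a finite set `S` into
exactly `k` nonempty clusters there is an injective embedding of `S` into `ℝ`
for which this partition is a global minimizer of the k-means objective among all
partitions into `k` nonempty clusters. -/
theorem kmeans_k_rich (S : Type*) [Fintype S] [DecidableEq S] (k : ℕ)
    (hk1 : 1 ≤ k) (hk2 : k ≤ Fintype.card S)
    (Γ : Finpartition (Finset.univ : Finset S)) (hΓ : Γ.parts.card = k) :
    ∃ x : S → ℝ, Function.Injective x ∧
      ∀ Γ' : Finpartition (Finset.univ : Finset S), Γ'.parts.card = k →
        kmeansObjective x Γ ≤ kmeansObjective x Γ' :=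
  kmeans_k_rich_general S k Γ hΓ
end

section
/- Let x, y, d, λ, a, b be real numbers with x ≥ 0, d ≥ 0, b ≥ 0 and 0 ≤ λ ≤ 1. If a·(x² + y²) ≤ b·((d + x)² + y²), then a·((λx)² + (λy)²) ≤ b·((d + λx)² + (λy)²). -/
/-- Key inequality for centric consistency of k-means (far-side case):
if it does not pay off to move a point to another cluster, it still does not pay
off after contracting the point towards its cluster center by a factor `λ`. -/
theorem contraction_inequality_far_side (x y d lam a b : ℝ)
    (hx : 0 ≤ x) (hd : 0 ≤ d) (hb : 0 ≤ b) (hlam0 : 0 ≤ lam) (hlam1 : lam ≤ 1)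
    (h : a * (x ^ 2 + y ^ 2) ≤ b * ((d + x) ^ 2 + y ^ 2)) :
    a * ((lam * x) ^ 2 + (lam * y) ^ 2) ≤ b * ((d + lam * x) ^ 2 + (lam * y) ^ 2) := by
  have hlam_d : lam * d ≤ d := mul_le_of_le_one_left hd hlam1
  calc a * ((lam * x) ^ 2 + (lam * y) ^ 2) = lam ^ 2 * (a * (x ^ 2 + y ^ 2)) := by ring
    _ ≤ lam ^ 2 * (b * ((d + x) ^ 2 + y ^ 2)) := mul_le_mul_of_nonneg_left h (sq_nonneg lam)
    _ = b * ((lam * d + lam * x) ^ 2 + (lam * y) ^ 2) := by ring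
    _ ≤ b * ((d + lam * x) ^ 2 + (lam * y) ^ 2) := by gcongr
end

section
/- Let x, y, d, λ, a, b be real numbers with x ≥ 0, d ≥ 0, a ≥ b ≥ 0 and 0 ≤ λ ≤ 1. If a·(x² + y²) ≤ b·((d − x)² + y²), then a·((λx)² + (λy)²) ≤ b·((d − λx)² + (λy)²). -/
/-!
Scaling by `λ` multiplies the cost `a · |p|²` of staying by `λ²`, so it suffices that the
gain `g(t) = b · ((d - t)² - t²) = b · (d² - 2dt)` of the far cluster's cost over the near
one's satisfies `λ² g(x) ≤ g(λx)`. Since `a ≥ b`, the hypothesis forces `g(x) ≥ 0`, and as `g`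
is affine, `g(λx) = λ g(x) + (1 - λ) g(0) ≥ λ g(x) ≥ λ² g(x)`.
-/

def reassignmentGain (b d t : ℝ) : ℝ := b * ((d - t) ^ 2 - t ^ 2)

lemma reassignmentGain_nonneg {x y d a b : ℝ} (hab : b ≤ a)
    (h : a * (x ^ 2 + y ^ 2) ≤ b * ((d - x) ^ 2 + y ^ 2)) :
    0 ≤ reassignmentGain b d x := by
  have hba : b * (x ^ 2 + y ^ 2) ≤ a * (x ^ 2 + y ^ 2) :=
    mul_le_mul_of_nonneg_right hab (by positivity)
  unfold reassignmentGain
  linear_combination hba + h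

lemma sq_mul_reassignmentGain_le {x d lam b : ℝ} (hb : 0 ≤ b) (hlam0 : 0 ≤ lam)
    (hlam1 : lam ≤ 1) (hg : 0 ≤ reassignmentGain b d x) :
    lam ^ 2 * reassignmentGain b d x ≤ reassignmentGain b d (lam * x) :=
  calc lam ^ 2 * reassignmentGain b d x
      ≤ lam * reassignmentGain b d x := by
        gcongr
        exact pow_le_of_le_one hlam0 hlam1 two_ne_zero
    _ ≤ lam * reassignmentGain b d x + (1 - lam) * reassignmentGain b d 0 := by
        have : 0 ≤ 1 - lam := sub_nonneg.2 hlam1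
        have : 0 ≤ reassignmentGain b d 0 := by
          simpa [reassignmentGain] using mul_nonneg hb (sq_nonneg d)
        exact le_add_of_nonneg_right (by positivity)
    _ = reassignmentGain b d (lam * x) := by unfold reassignmentGain; ring

theorem contraction_inequality_near_side_general (x y d lam a b : ℝ)
    (hab : b ≤ a) (hb : 0 ≤ b)
    (hlam0 : 0 ≤ lam) (hlam1 : lam ≤ 1)
    (h : a * (x ^ 2 + y ^ 2) ≤ b * ((d - x) ^ 2 + y ^ 2)) :
    a * ((lam * x) ^ 2 + (lam * y) ^ 2) ≤ b * ((d - lam * x) ^ 2 + (lam * y) ^ 2) := by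
  have hgain := sq_mul_reassignmentGain_le hb hlam0 hlam1 (reassignmentGain_nonneg hab h)
  unfold reassignmentGain at hgain
  calc a * ((lam * x) ^ 2 + (lam * y) ^ 2) = lam ^ 2 * (a * (x ^ 2 + y ^ 2)) := by ring
    _ ≤ lam ^ 2 * (b * ((d - x) ^ 2 + y ^ 2)) := by gcongr
    _ = lam ^ 2 * (b * ((d - x) ^ 2 - x ^ 2)) + b * ((lam * x) ^ 2 + (lam * y) ^ 2) := by ring
    _ ≤ b * ((d - lam * x) ^ 2 - (lam * x) ^ 2) + b * ((lam * x) ^ 2 + (lam * y) ^ 2) := by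
        gcongr ?_ + _
    _ = b * ((d - lam * x) ^ 2 + (lam * y) ^ 2) := by ring

/-- Key inequality for centric consistency of k-means (near-side case):
if it does not pay off to move a point to another cluster, it still does not pay
off after contracting the point towards its cluster center by a factor `λ`,
where the coefficients satisfy `a ≥ b ≥ 0`. -/
theorem contraction_inequality_near_side (x y d lam a b : ℝ)
    (hx : 0 ≤ x) (hd : 0 ≤ d) (hab : b ≤ a) (hb : 0 ≤ b)
    (hlam0 : 0 ≤ lam) (hlam1 : lam ≤ 1)
    (h : a * (x ^ 2 + y ^ 2) ≤ b * ((d - x) ^ 2 + y ^ 2)) :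
    a * ((lam * x) ^ 2 + (lam * y) ^ 2) ≤ b * ((d - lam * x) ^ 2 + (lam * y) ^ 2) :=
  contraction_inequality_near_side_general x y d lam a b hab hb hlam0 hlam1 h
end

section
/- Let (x_i)_{i∈I} be a finite family of points in ℝ^m and Γ a partition of I into k nonempty clusters. Call Γ a local minimum of the k-means objective for (x_i) if for every index i ∈ I and every reassignment of the single point i from its cluster of Γ to another cluster of Γ (such that its original cluster remains nonempty), the k-means objective Q does not decrease. Suppose Γ is a local minimum for (x_i), and let (x'_i) be obtained from (x_i) by a Γ*-transform of one cluster C ∈ Γ with parameter λ ∈ (0,1]. Then Γ is also a local minimum of the k-means objective for (x'_i). -/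
open Finset

/-- Centroid of the points `x i`, `i ∈ A`, in `ℝ^m`. -/
noncomputable def centroid {ι : Type*} {m : ℕ} (x : ι → EuclideanSpace ℝ (Fin m))
    (A : Finset ι) : EuclideanSpace ℝ (Fin m) :=
  ((A.card : ℝ)⁻¹) • ∑ i ∈ A, x i

/-- Within-cluster sum of squared distances to the centroid. -/
noncomputable def within {ι : Type*} {m : ℕ} (x : ι → EuclideanSpace ℝ (Fin m))
    (A : Finset ι) : ℝ :=
  ∑ i ∈ A, ‖x i - centroid x A‖ ^ 2

/-- `Γ` is a local minimum of the k-means objective for the point family `x`: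
reassigning any single point `i` from its cluster `C1` (which stays nonempty) to
another cluster `C2` of `Γ` does not decrease the k-means objective.  Since only
the two clusters involved change, this is expressed via their within-sums. -/
def IsKMeansLocalMin {ι : Type*} [Fintype ι] [DecidableEq ι] {m : ℕ}
    (x : ι → EuclideanSpace ℝ (Fin m))
    (Γ : Finpartition (Finset.univ : Finset ι)) : Prop :=
  ∀ C1 ∈ Γ.parts, ∀ C2 ∈ Γ.parts, C1 ≠ C2 → ∀ i ∈ C1, 2 ≤ C1.card →
    within x C1 + within x C2 ≤ within x (C1.erase i) + within x (insert i C2)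

/-!
Moving a point `i` from a cluster `A` to a cluster `B` changes the objective by
`#B / (#B + 1) * ‖x i - μ_B‖² - #A / (#A - 1) * ‖x i - μ_A‖²`, so local minimality only involves
the distances of points to the centroids. The transform fixes every centroid and every point
outside `C`, so only moves out of `C` need an argument. For those, with `a = μ_C - μ_B` and
`b = x i - μ_C`, local minimality before and after reads `α ‖b‖² ≤ β ‖a + b‖²` and
`α ‖λ b‖² ≤ β ‖a + λ b‖²`, where `β ≤ 1 ≤ α`; the second follows from the first by concavity in `λ`.
-/

section Centroid

variable {ι : Type*} {m : ℕ} {x y : ι → EuclideanSpace ℝ (Fin m)} {A : Finset ι}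

lemma centroid_congr (h : ∀ i ∈ A, x i = y i) : centroid x A = centroid y A := by
  rw [_root_.centroid, _root_.centroid, sum_congr rfl h]

lemma card_smul_centroid (hA : A.Nonempty) : (#A : ℝ) • centroid x A = ∑ i ∈ A, x i := by
  rw [_root_.centroid, smul_smul, mul_inv_cancel₀ (by positivity), one_smul]

lemma sum_sub_centroid (hA : A.Nonempty) : ∑ i ∈ A, (x i - centroid x A) = 0 := by
  rw [sum_sub_distrib, sum_const, ← Nat.cast_smul_eq_nsmul ℝ, card_smul_centroid hA, sub_self]

lemma sum_norm_sub_sq (hA : A.Nonempty) (p : EuclideanSpace ℝ (Fin m)) :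
    ∑ i ∈ A, ‖x i - p‖ ^ 2 = within x A + #A * ‖centroid x A - p‖ ^ 2 := by
  set μ := centroid x A
  have hsplit : ∀ i, ‖x i - p‖ ^ 2 = ‖x i - μ‖ ^ 2 + 2 * inner ℝ (x i - μ) (μ - p) + ‖μ - p‖ ^ 2 :=
    fun i => by rw [← norm_add_sq_real, sub_add_sub_cancel]
  simp only [hsplit, sum_add_distrib, ← mul_sum, ← sum_inner, sum_sub_centroid hA, inner_zero_left,
    mul_zero, add_zero, sum_const, nsmul_eq_mul, within, μ]

lemma centroid_homothety (hA : A.Nonempty) (p : EuclideanSpace ℝ (Fin m)) (t : ℝ) :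
    centroid (fun i => p + t • (x i - p)) A = p + t • (centroid x A - p) := by
  have hcard : (#A : ℝ) ≠ 0 := by positivity
  rw [_root_.centroid, _root_.centroid, sum_add_distrib, sum_const, ← smul_sum, sum_sub_distrib,
    sum_const, ← Nat.cast_smul_eq_nsmul ℝ]
  match_scalars <;> field_simp

variable [DecidableEq ι] {i : ι}

lemma centroid_insert (hA : A.Nonempty) (hi : i ∉ A) :
    centroid x (insert i A) = centroid x A + ((#A : ℝ) + 1)⁻¹ • (x i - centroid x A) := by
  have hcard : (#A : ℝ) ≠ 0 := by positivity
  rw [_root_.centroid, sum_insert hi, card_insert_of_notMem hi, ← card_smul_centroid hA]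
  push_cast
  match_scalars <;> field_simp
  ring

lemma within_insert (hA : A.Nonempty) (hi : i ∉ A) :
    within x (insert i A) = within x A + #A / (#A + 1) * ‖x i - centroid x A‖ ^ 2 := by
  set d := x i - centroid x A
  have hcard : (#A : ℝ) + 1 ≠ 0 := by positivity
  have hnew : x i - centroid x (insert i A) = (#A / (#A + 1) : ℝ) • d := by
    rw [centroid_insert hA hi]; match_scalars <;> field_simp <;> ring
  have hold : centroid x A - centroid x (insert i A) = (-((#A : ℝ) + 1)⁻¹) • d := by
    rw [centroid_insert hA hi]; module
  rw [within, sum_insert hi, sum_norm_sub_sq hA, hnew, hold, norm_smul, norm_smul,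
    Real.norm_eq_abs, Real.norm_eq_abs, mul_pow, mul_pow, sq_abs, sq_abs]
  field_simp
  ring

lemma within_erase (hi : i ∈ A) (hA : 2 ≤ #A) :
    within x A = within x (A.erase i) + #A / (#A - 1) * ‖x i - centroid x A‖ ^ 2 := by
  set B := A.erase i
  have hB : B.Nonempty := by rw [← card_pos, card_erase_of_mem hi]; omega
  have hiB : i ∉ B := notMem_erase i A
  have hAB : (#A : ℝ) = #B + 1 := by
    have := card_erase_add_one hi
    exact_mod_cast this.symm
  have hcard : (#B : ℝ) ≠ 0 := by positivity
  have hd : x i - centroid x A = (#B / (#B + 1) : ℝ) • (x i - centroid x B) := by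
    rw [← insert_erase hi, centroid_insert hB hiB]
    match_scalars <;> field_simp <;> ring
  rw [hAB, add_sub_cancel_right, hd, norm_smul, Real.norm_eq_abs, mul_pow, sq_abs,
    ← insert_erase hi, within_insert hB hiB]
  field_simp

end Centroid

lemma within_add_within_le_erase_add_insert_iff {ι : Type*} [DecidableEq ι] {m : ℕ}
    {x : ι → EuclideanSpace ℝ (Fin m)} {A B : Finset ι} {i : ι} (hi : i ∈ A) (hA : 2 ≤ #A)
    (hB : B.Nonempty) (hiB : i ∉ B) :
    within x A + within x B ≤ within x (A.erase i) + within x (insert i B) ↔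
      #A / (#A - 1) * ‖x i - centroid x A‖ ^ 2 ≤ #B / (#B + 1) * ‖x i - centroid x B‖ ^ 2 := by
  rw [within_erase hi hA, within_insert hB hiB]
  constructor <;> intro h <;> linarith

-- The difference of the two sides is a concave quadratic in `t` (as `β ≤ α`), nonnegative at
-- `t = 0` and at `t = 1`.
lemma mul_norm_smul_sq_le_mul_norm_add_smul_sq {E : Type*} [NormedAddCommGroup E]
    [InnerProductSpace ℝ E] {a b : E} {α β t : ℝ} (hβ : 0 ≤ β) (hβα : β ≤ α) (ht0 : 0 ≤ t)
    (ht1 : t ≤ 1) (h : α * ‖b‖ ^ 2 ≤ β * ‖a + b‖ ^ 2) :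
    α * ‖t • b‖ ^ 2 ≤ β * ‖a + t • b‖ ^ 2 := by
  rw [norm_add_sq_real] at h ⊢
  rw [norm_smul, real_inner_smul_right, Real.norm_eq_abs, mul_pow, sq_abs]
  nlinarith [mul_nonneg (mul_nonneg (sub_nonneg.2 hβα) (sq_nonneg ‖b‖))
      (mul_nonneg ht0 (sub_nonneg.2 ht1)),
    mul_nonneg (sub_nonneg.2 ht1) (mul_nonneg hβ (sq_nonneg ‖a‖)), mul_le_mul_of_nonneg_left h ht0]

section CentricTransform

variable {ι : Type*} [DecidableEq ι] {m : ℕ} (x : ι → EuclideanSpace ℝ (Fin m)) (C : Finset ι)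
  (t : ℝ)

noncomputable def centricTransform : ι → EuclideanSpace ℝ (Fin m) := fun i =>
  if i ∈ C then centroid x C + t • (x i - centroid x C) else x i

variable {x C t}

lemma centricTransform_of_mem {i : ι} (hi : i ∈ C) :
    centricTransform x C t i = centroid x C + t • (x i - centroid x C) := if_pos hi

lemma centricTransform_of_notMem {i : ι} (hi : i ∉ C) : centricTransform x C t i = x i :=
  if_neg hi

lemma centroid_centricTransform_self (hC : C.Nonempty) :
    centroid (centricTransform x C t) C = centroid x C := by
  rw [centroid_congr fun i => centricTransform_of_mem, centroid_homothety hC, sub_self, smul_zero,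
    add_zero]

lemma centroid_centricTransform_of_disjoint {D : Finset ι} (hD : Disjoint D C) :
    centroid (centricTransform x C t) D = centroid x D :=
  centroid_congr fun _ hi => centricTransform_of_notMem (disjoint_left.1 hD hi)

lemma centroid_centricTransform_of_mem_parts [Fintype ι] {Γ : Finpartition (univ : Finset ι)}
    (hC : C ∈ Γ.parts) {D : Finset ι} (hD : D ∈ Γ.parts) :
    centroid (centricTransform x C t) D = centroid x D := by
  obtain rfl | hne := eq_or_ne D C
  · exact centroid_centricTransform_self (Γ.nonempty_of_mem_parts hC)
  · exact centroid_centricTransform_of_disjoint (Γ.disjoint hD hC hne)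

end CentricTransform

/-- Centric consistency (the `Γ*`-transform of one cluster) preserves local minima
of the k-means objective. -/
theorem kmeans_localMin_preserved_by_centric_transform
    {ι : Type*} [Fintype ι] [DecidableEq ι] {m : ℕ}
    (x : ι → EuclideanSpace ℝ (Fin m))
    (Γ : Finpartition (Finset.univ : Finset ι))
    (hloc : IsKMeansLocalMin x Γ)
    (C : Finset ι) (hC : C ∈ Γ.parts)
    (lam : ℝ) (hlam0 : 0 < lam) (hlam1 : lam ≤ 1)
    (x' : ι → EuclideanSpace ℝ (Fin m))
    (hx' : ∀ i, x' i =
      if i ∈ C then centroid x C + lam • (x i - centroid x C) else x i) :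
    IsKMeansLocalMin x' Γ := by
  obtain rfl : x' = centricTransform x C lam := funext hx'
  intro C1 h1 C2 h2 hne i hi hcard
  have hiC2 : i ∉ C2 := disjoint_left.1 (Γ.disjoint h1 h2 hne) hi
  have hC2 := Γ.nonempty_of_mem_parts h2
  have hmove := hloc C1 h1 C2 h2 hne i hi hcard
  rw [within_add_within_le_erase_add_insert_iff hi hcard hC2 hiC2] at hmove ⊢
  rw [centroid_centricTransform_of_mem_parts hC h1, centroid_centricTransform_of_mem_parts hC h2]
  obtain rfl | hC1 := eq_or_ne C1 C
  · have hβα : (#C2 : ℝ) / (#C2 + 1) ≤ #C1 / (#C1 - 1) := by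
      have hC1 : (2 : ℝ) ≤ #C1 := by exact_mod_cast hcard
      calc (#C2 : ℝ) / (#C2 + 1) ≤ 1 := (div_le_one (by positivity)).2 (by linarith)
        _ ≤ #C1 / (#C1 - 1) := (one_le_div (by linarith)).2 (by linarith)
    have hsplit :
        x i - centroid x C2 = (centroid x C1 - centroid x C2) + (x i - centroid x C1) := by
      abel
    rw [hsplit] at hmove
    rw [centricTransform_of_mem hi, add_sub_cancel_left, add_sub_right_comm]
    exact mul_norm_smul_sq_le_mul_norm_add_smul_sq (by positivity) hβα hlam0.le hlam1 hmove
  · rwa [centricTransform_of_notMem fun hiC => hC1 (Γ.eq_of_mem_parts h1 hC hi hiC)]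
end

section
/- Let n1, n2, n21 be positive real numbers with n21 ≤ n2/2 and set n22 = n2 − n21. Let r1, r2, r21, r22, g be nonnegative reals with r21 ≤ r2, r22 ≤ r2, n21·r21 = n22·r22, and g ≥ r2·√(2·(1 + n2/(2·n1))) − r1. Then n21·r21² + n22·r22² ≤ (n1·n21/(n1 + n21))·(r1 + r2 + g − r21)². (This is the gap condition ensuring that a cluster of n1 elements enclosed in a ball of radius r1 does not profitably take over n21 elements of a neighboring cluster of n2 elements enclosed in a ball of radius r2, when the gap between the enclosing balls is g.) -/
/-!
The balance condition gives `n22 * r22 ^ 2 = n21 * r21 * r22 ≤ n21 * r2 ^ 2`, so the left side is at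
most `2 * n21 * r2 ^ 2`. The gap condition gives `r1 + r2 + g - r21 ≥ r2 * √(2 + n2 / n1)`, and
`n2 ≥ 2 * n21` makes `n1 * n21 / (n1 + n21) * r2 ^ 2 * (2 + n2 / n1) ≥ 2 * n21 * r2 ^ 2`.
-/

lemma mul_sq_add_mul_sq_le_of_mul_eq_mul {a b x y R : ℝ} (ha : 0 ≤ a) (hx : 0 ≤ x) (hy : 0 ≤ y)
    (hxR : x ≤ R) (hyR : y ≤ R) (h : a * x = b * y) :
    a * x ^ 2 + b * y ^ 2 ≤ 2 * a * R ^ 2 := by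
  have hby : b * y ^ 2 = a * (x * y) := by rw [sq, ← mul_assoc, ← h, mul_assoc]
  have hxx : x ^ 2 ≤ R ^ 2 := pow_le_pow_left₀ hx hxR 2
  have hxy : x * y ≤ R ^ 2 := by rw [sq]; exact mul_le_mul hxR hyR hy (hx.trans hxR)
  rw [hby]
  nlinarith [mul_le_mul_of_nonneg_left hxx ha, mul_le_mul_of_nonneg_left hxy ha]

lemma two_mul_sq_le_mul_sq_mul_sqrt {n1 n2 n21 : ℝ} (r : ℝ) (hn1 : 0 < n1) (hn21 : 0 ≤ n21)
    (hn21le : n21 ≤ n2 / 2) :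
    2 * n21 * r ^ 2 ≤
      n1 * n21 / (n1 + n21) * (r * Real.sqrt (2 * (1 + n2 / (2 * n1)))) ^ 2 := by
  have hn2 : 0 ≤ n2 := by linarith
  have hden : 0 < n1 + n21 := by linarith
  rw [mul_pow, Real.sq_sqrt (by positivity)]
  have hexpand : n1 * n21 / (n1 + n21) * (r ^ 2 * (2 * (1 + n2 / (2 * n1)))) =
      n21 * r ^ 2 * (2 * n1 + n2) / (n1 + n21) := by
    field_simp
  rw [hexpand, le_div_iff₀ hden]
  nlinarith [mul_nonneg (mul_nonneg hn21 (sq_nonneg r)) (by linarith : (0 : ℝ) ≤ n2 - 2 * n21)]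

theorem takeover_gap_inequality_general
    (n1 n2 n21 n22 r1 r2 r21 r22 g : ℝ)
    (hn1 : 0 < n1) (hn21 : 0 < n21)
    (hn21le : n21 ≤ n2 / 2)
    (hr2 : 0 ≤ r2) (hr21 : 0 ≤ r21) (hr22 : 0 ≤ r22)
    (hr21le : r21 ≤ r2) (hr22le : r22 ≤ r2)
    (hbal : n21 * r21 = n22 * r22)
    (hgap : r2 * Real.sqrt (2 * (1 + n2 / (2 * n1))) - r1 ≤ g) :
    n21 * r21 ^ 2 + n22 * r22 ^ 2 ≤
      (n1 * n21 / (n1 + n21)) * (r1 + r2 + g - r21) ^ 2 := by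
  calc n21 * r21 ^ 2 + n22 * r22 ^ 2 ≤ 2 * n21 * r2 ^ 2 :=
        mul_sq_add_mul_sq_le_of_mul_eq_mul hn21.le hr21 hr22 hr21le hr22le hbal
    _ ≤ n1 * n21 / (n1 + n21) * (r2 * Real.sqrt (2 * (1 + n2 / (2 * n1)))) ^ 2 :=
        two_mul_sq_le_mul_sq_mul_sqrt r2 hn1 hn21.le hn21le
    _ ≤ n1 * n21 / (n1 + n21) * (r1 + r2 + g - r21) ^ 2 := by
        gcongr
        linarith

/-- Gap condition ensuring that a cluster of `n1` elements enclosed in a ball of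
radius `r1` does not profitably take over `n21` elements of a neighboring cluster of
`n2` elements enclosed in a ball of radius `r2`, when the gap between the enclosing
balls is `g`. -/
theorem takeover_gap_inequality
    (n1 n2 n21 n22 r1 r2 r21 r22 g : ℝ)
    (hn1 : 0 < n1) (hn2 : 0 < n2) (hn21 : 0 < n21)
    (hn21le : n21 ≤ n2 / 2) (hn22 : n22 = n2 - n21)
    (hr1 : 0 ≤ r1) (hr2 : 0 ≤ r2) (hr21 : 0 ≤ r21) (hr22 : 0 ≤ r22) (hg : 0 ≤ g)
    (hr21le : r21 ≤ r2) (hr22le : r22 ≤ r2)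
    (hbal : n21 * r21 = n22 * r22)
    (hgap : r2 * Real.sqrt (2 * (1 + n2 / (2 * n1))) - r1 ≤ g) :
    n21 * r21 ^ 2 + n22 * r22 ^ 2 ≤
      (n1 * n21 / (n1 + n21)) * (r1 + r2 + g - r21) ^ 2 :=
  takeover_gap_inequality_general n1 n2 n21 n22 r1 r2 r21 r22 g hn1 hn21 hn21le hr2 hr21 hr22 hr21le
    hr22le hbal hgap
end

section
/- Let I be a nonempty finite index set and let (y_i)_{i∈I} and (y'_i)_{i∈I} be families of points in ℝ^m such that ‖y'_i − y'_j‖ ≤ ‖y_i − y_j‖ for all i, j ∈ I. Let x, x' ∈ ℝ^m satisfy ‖x' − y'_i‖ ≥ ‖x − y_i‖ for all i ∈ I. Then ‖x' − μ'‖ ≥ ‖x − μ‖, where μ and μ' are the centroids of (y_i)_{i∈I} and (y'_i)_{i∈I} respectively. (Hence a Kleinberg consistency transformation, which shrinks within-cluster distances and enlarges distances from outside points to cluster elements, never decreases the distance from an outside point to the cluster's centroid.) -/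
open Finset

/-!
With `μ` the centroid of `n` points `y i`, the parallel-axis identity
`∑ ‖x - y i‖² = n ‖x - μ‖² + ∑ ‖y i - μ‖²`, applied also at `x = y j` and summed over `j`,
gives `n ‖x - μ‖² = ∑ ‖x - y i‖² - (2n)⁻¹ ∑ ∑ ‖y i - y j‖²`. The right-hand side grows with
the distances from `x` to the points and shrinks with the distances between the points.
-/

section Centroid

variable {E : Type*} [NormedAddCommGroup E] [InnerProductSpace ℝ E]
  {ι : Type*} [Fintype ι] [Nonempty ι]

lemma sum_sub_centroid_eq_zero (y : ι → E) :
    ∑ i, ((Fintype.card ι : ℝ)⁻¹ • ∑ j, y j - y i) = 0 := by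
  have hn : (Fintype.card ι : ℝ) ≠ 0 := Nat.cast_ne_zero.mpr Fintype.card_ne_zero
  rw [sum_sub_distrib, sum_const, card_univ, ← Nat.cast_smul_eq_nsmul ℝ, smul_smul,
    mul_inv_cancel₀ hn, one_smul, sub_self]

lemma sum_norm_sub_sq_eq_card_mul_add (x : E) (y : ι → E) :
    ∑ i, ‖x - y i‖ ^ 2 =
      Fintype.card ι * ‖x - (Fintype.card ι : ℝ)⁻¹ • ∑ j, y j‖ ^ 2 +
        ∑ i, ‖y i - (Fintype.card ι : ℝ)⁻¹ • ∑ j, y j‖ ^ 2 := by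
  set μ := (Fintype.card ι : ℝ)⁻¹ • ∑ j, y j
  calc ∑ i, ‖x - y i‖ ^ 2
      = ∑ i, (‖x - μ‖ ^ 2 + 2 * inner ℝ (x - μ) (μ - y i) + ‖μ - y i‖ ^ 2) := by
        refine sum_congr rfl fun i _ => ?_
        rw [← norm_add_sq_real, sub_add_sub_cancel]
    _ = Fintype.card ι * ‖x - μ‖ ^ 2 + 2 * inner ℝ (x - μ) (∑ i, (μ - y i)) +
          ∑ i, ‖μ - y i‖ ^ 2 := by
        simp only [sum_add_distrib, inner_sum, mul_sum, sum_const, card_univ, nsmul_eq_mul]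
    _ = _ := by
        rw [sum_sub_centroid_eq_zero, inner_zero_right, mul_zero, add_zero]
        simp only [norm_sub_rev μ]

lemma sum_sum_norm_sub_sq_eq (y : ι → E) :
    ∑ i, ∑ j, ‖y i - y j‖ ^ 2 =
      2 * Fintype.card ι * ∑ i, ‖y i - (Fintype.card ι : ℝ)⁻¹ • ∑ j, y j‖ ^ 2 := by
  simp only [sum_norm_sub_sq_eq_card_mul_add, sum_add_distrib, ← mul_sum, sum_const,
    card_univ, nsmul_eq_mul]
  ring

lemma card_mul_norm_sub_centroid_sq (x : E) (y : ι → E) :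
    Fintype.card ι * ‖x - (Fintype.card ι : ℝ)⁻¹ • ∑ j, y j‖ ^ 2 =
      ∑ i, ‖x - y i‖ ^ 2 - (2 * (Fintype.card ι : ℝ))⁻¹ * ∑ i, ∑ j, ‖y i - y j‖ ^ 2 := by
  have hn : (Fintype.card ι : ℝ) ≠ 0 := Nat.cast_ne_zero.mpr Fintype.card_ne_zero
  rw [sum_sum_norm_sub_sq_eq, ← mul_assoc, inv_mul_cancel₀ (by positivity), one_mul,
    sum_norm_sub_sq_eq_card_mul_add, add_sub_cancel_right]

end Centroid

/-- A Kleinberg consistency transformation never decreases the distance from an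
outside point to a cluster's centroid: if all pairwise distances within the family
`y` do not increase (yielding `y'`) while all distances from `x` to the members of
the family do not decrease (with `x` becoming `x'`), then the distance from the
outside point to the centroid of the family does not decrease. -/
theorem dist_to_centroid_nondecreasing {ι : Type*} [Fintype ι] [Nonempty ι] {m : ℕ}
    (y y' : ι → EuclideanSpace ℝ (Fin m))
    (hwithin : ∀ i j, ‖y' i - y' j‖ ≤ ‖y i - y j‖)
    (x x' : EuclideanSpace ℝ (Fin m))
    (houter : ∀ i, ‖x - y i‖ ≤ ‖x' - y' i‖) :
    ‖x - ((Fintype.card ι : ℝ)⁻¹) • ∑ i, y i‖ ≤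
      ‖x' - ((Fintype.card ι : ℝ)⁻¹) • ∑ i, y' i‖ := by
  have hn : (0 : ℝ) < Fintype.card ι := Nat.cast_pos.mpr Fintype.card_pos
  rw [← pow_le_pow_iff_left₀ (norm_nonneg _) (norm_nonneg _) two_ne_zero,
    ← mul_le_mul_iff_right₀ hn, card_mul_norm_sub_centroid_sq, card_mul_norm_sub_centroid_sq]
  gcongr
  exacts [houter _, hwithin _ _]
end
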